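/- (Theorem 1) For every block length n, every k with 1 <= k < n, and every delta > 0: P_err(n,k,delta) <= (1/(1-2^{-n})) P_delta + e^{-n (C_L - delta - R)}, where R = (k/n) ln 2. -/

import Mathlib

open scoped Classical BigOperators
open Finset

noncomputable section

/-- The Gaussian tail function `Q(s) = (1/sqrt(2*pi)) * int_s^infty e^{-x^2/2} dx`. -/
def gaussQ (s : ℝ) : ℝ :=
  (1 / Real.sqrt (2 * Real.pi)) * ∫ x in Set.Ioi s, Real.exp (-x ^ 2 / 2)

/-- The inverse of the Gaussian tail function (on `(0,1)`). -/
def gaussQinv : ℝ → ℝ := Function.invFun gaussQ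

/-- A binary-input memoryless channel with finite output alphabet `Y`:
transition probabilities `p x y = p(y|x)`, all positive, with rows summing to one. -/
structure BIMC (Y : Type) [Fintype Y] where
  p : ZMod 2 → Y → ℝ
  p_pos : ∀ x y, 0 < p x y
  p_sum : ∀ x, ∑ y, p x y = 1

namespace BIMC

variable {Y : Type} [Fintype Y] (W : BIMC Y)

/-- Output marginal under the uniform input. -/
def pY (y : Y) : ℝ := (W.p 0 y + W.p 1 y) / 2

/-- Posterior probability of input `x` given output `y`. -/
def pXY (x : ZMod 2) (y : Y) : ℝ := W.p x y / (W.p 0 y + W.p 1 y)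

/-- Conditional entropy `H(X|Y)` (in nats) for the uniform input. -/
def condEnt : ℝ :=
  ∑ y, W.pY y * ∑ x : ZMod 2, W.pXY x y * (-Real.log (W.pXY x y))

/-- The linear capacity `ln 2 - H(X|Y)`. -/
def CL : ℝ := Real.log 2 - W.condEnt

/-- The BIMC-L jar. -/
def jar (n : ℕ) (δ : ℝ) (yv : Fin n → Y) : Finset (Fin n → ZMod 2) :=
  Finset.univ.filter fun xv =>
    -(1 / (n : ℝ)) * ∑ i, Real.log (W.pXY (xv i) (yv i)) ≤ W.condEnt + δ

end BIMC

/-- The nonzero vectors in the null space of a parity-check matrix over `GF(2)`. -/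
def nullNZ (n k : ℕ) (H : Matrix (Fin (n - k)) (Fin n) (ZMod 2)) :
    Finset (Fin n → ZMod 2) :=
  Finset.univ.filter fun x => Matrix.mulVec H x = 0 ∧ x ≠ 0

namespace BIMC

variable {Y : Type} [Fintype Y] (W : BIMC Y)

/-- `P_delta`: the probability that `-(1/n) * sum_i ln p(X_i|Z_i) > H(X|Y) + δ`
where `(X_i, Z_i)` are i.i.d., `X_i` uniform on `{0,1}` and `Z_i ~ p(.|X_i)`. -/
def Pdelta (n : ℕ) (δ : ℝ) : ℝ :=
  ∑ xv : Fin n → ZMod 2, ∑ zv : Fin n → Y,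
    (∏ i, (1 / 2 : ℝ) * W.p (xv i) (zv i)) *
      (if W.condEnt + δ < -(1 / (n : ℝ)) * ∑ i, Real.log (W.pXY (xv i) (zv i))
        then 1 else 0)

/-- `P_err(n,k,δ)`: the probability, under the Gallager parity-check ensemble
(uniform parity-check matrix `H`; given `H`, the transmitted codeword is uniform over
the nonzero null-space vectors, which is the law of the lexicographically enumerated
codeword `X^n(q)` under a uniform message `q`) and the memoryless channel, that the
transmitted codeword falls outside the jar or some other codeword lies in the jar. -/
def Perr (n k : ℕ) (δ : ℝ) : ℝ :=
  ∑ H : Matrix (Fin (n - k)) (Fin n) (ZMod 2),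
    ∑ xv : Fin n → ZMod 2, ∑ yv : Fin n → Y,
      (1 / (2 : ℝ) ^ ((n - k) * n)) *
        ((if xv ∈ nullNZ n k H then 1 / ((nullNZ n k H).card : ℝ) else 0) *
          ((∏ i, W.p (xv i) (yv i)) *
            (if xv ∉ W.jar n δ yv ∨
                ∃ zv, zv ≠ xv ∧ Matrix.mulVec H zv = 0 ∧ zv ∈ W.jar n δ yv
              then 1 else 0)))

end BIMC

/-!
Bound the error event by the union of "the sent codeword `x` misses the jar" and "some other
codeword `z` lies in the jar", and average over the ensemble. Right multiplication by `GL_n(𝔽₂)`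
permutes the parity-check matrices, and `GL_n(𝔽₂)` is transitive on nonzero vectors and on pairs
of distinct nonzero vectors. So every nonzero `x` is sent with probability `1 / (2ⁿ - 1)`, which
bounds the first event by `2ⁿ / (2ⁿ - 1) · P_δ`. Given that `x` is sent, `z` is a codeword with one
probability for `z = 0` and a smaller common probability for the other `z ≠ x`, and these average
to `2^{-(n-k)}` over `z ≠ x`. On the jar `p(z|y) ≥ e^{-n(H(X|Y)+δ)}`, so the second event costs at
most `e^{n(H(X|Y)+δ)}` times these probabilities weighted by the doubly stochastic kernel
`Σ_y p(y|x) p(z|y)`, that is at most `e^{n(H(X|Y)+δ)} 2^{-(n-k)}`.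
-/

open Matrix

theorem LinearIndependent.exists_linearEquiv_apply_eq {K V ι : Type*} [Field K] [AddCommGroup V]
    [Module K V] [FiniteDimensional K V] {v w : ι → V} (hv : LinearIndependent K v)
    (hw : LinearIndependent K w) : ∃ g : V ≃ₗ[K] V, ∀ i, g (v i) = w i := by
  obtain ⟨g, hg⟩ := Submodule.exists_linearEquiv_restrict_eq
    (hv.linearCombinationEquiv.symm ≪≫ₗ hw.linearCombinationEquiv)
  refine ⟨g, fun i => ?_⟩
  simpa using (hg (hv.linearCombinationEquiv (Finsupp.single i 1))).symm

theorem linearIndependent_pair_zmod_two {V : Type*} [AddCommGroup V] [Module (ZMod 2) V]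
    {x z : V} (hx : x ≠ 0) (hz : z ≠ 0) (hxz : x ≠ z) : LinearIndependent (ZMod 2) ![x, z] := by
  rw [LinearIndependent.pair_iff' hx]
  intro a
  obtain rfl | rfl : a = 0 ∨ a = 1 := by revert a; decide
  · rw [zero_smul]; exact hz.symm
  · rw [one_smul]; exact hxz

theorem Matrix.card_filter_mulVec_eq_zero {m n : ℕ} {x : Fin n → ZMod 2} (hx : x ≠ 0) :
    #{H : Matrix (Fin m) (Fin n) (ZMod 2) | H *ᵥ x = 0} = 2 ^ (m * (n - 1)) := by
  let f := mulVec.addMonoidHomLeft (m := Fin m) x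
  -- `f` is onto, so all its fibres have the size of its kernel.
  obtain ⟨j, hj⟩ : ∃ j, x j ≠ 0 := Function.ne_iff.1 hx
  have hxj : x j = 1 := by revert hj; generalize x j = a; decide +revert
  have hsurj : ∀ v, v ∈ Set.range f := fun v =>
    ⟨of fun i l => if l = j then v i else 0, by
      ext i
      simp [f, mulVec.addMonoidHomLeft, mulVec, dotProduct, hxj]⟩
  have hfib : ∀ v, #{H | f H = v} = #{H : Matrix (Fin m) (Fin n) (ZMod 2) | H *ᵥ x = 0} :=
    fun v => AddMonoidHom.card_fiber_eq_of_mem_range f (hsurj v) (hsurj 0)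
  have htot := card_eq_sum_card_fiberwise (f := f) (s := univ) (t := univ) fun _ _ => mem_univ _
  simp only [hfib, sum_const, card_univ, smul_eq_mul] at htot
  change Fintype.card (Fin m → Fin n → ZMod 2) = Fintype.card (Fin m → ZMod 2) * _ at htot
  simp only [Fintype.card_fun, ZMod.card, Fintype.card_fin, ← pow_mul] at htot
  obtain ⟨n, rfl⟩ : ∃ n', n = n' + 1 := ⟨n - 1, by have := j.pos; omega⟩
  rw [add_one_mul, pow_add, mul_comm] at htot
  rw [Nat.add_sub_cancel, mul_comm]
  exact (Nat.eq_of_mul_eq_mul_left (by positivity) htot).symm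

lemma ite_or_exists_ne_le {α : Type*} [Fintype α] [DecidableEq α] (b : α) (p : Prop) [Decidable p]
    (q : α → Prop) [DecidablePred q] :
    (if p ∨ ∃ a, a ≠ b ∧ q a then (1 : ℝ) else 0) ≤
      (if p then 1 else 0) + ∑ a ∈ univ.erase b, if q a then 1 else 0 := by
  have hsum : (0 : ℝ) ≤ ∑ a ∈ univ.erase b, if q a then 1 else 0 := by positivity
  split_ifs with h hp
  · linarith
  · obtain ⟨a, hab, hqa⟩ := h.resolve_left hp
    have := single_le_sum (f := fun a => if q a then (1 : ℝ) else 0) (fun _ _ => by positivity)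
      (mem_erase.2 ⟨hab, mem_univ a⟩)
    simp only [if_pos hqa] at this
    linarith
  · positivity
  · linarith

lemma one_div_one_sub_two_rpow_neg {n : ℕ} (hn : 0 < n) :
    1 / (1 - (2 : ℝ) ^ (-(n : ℝ))) = 2 ^ n / (2 ^ n - 1) := by
  have h2n : (1 : ℝ) < 2 ^ n := one_lt_pow₀ one_lt_two hn.ne'
  rw [Real.rpow_neg zero_le_two, Real.rpow_natCast]
  field_simp

lemma mem_nullNZ {n k : ℕ} {H : Matrix (Fin (n - k)) (Fin n) (ZMod 2)} {x : Fin n → ZMod 2} :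
    x ∈ nullNZ n k H ↔ H *ᵥ x = 0 ∧ x ≠ 0 := by
  simp [nullNZ]

namespace Gallager

variable {n k : ℕ}

def codewordProb (H : Matrix (Fin (n - k)) (Fin n) (ZMod 2)) (x : Fin n → ZMod 2) : ℝ :=
  if x ∈ nullNZ n k H then 1 / ((nullNZ n k H).card : ℝ) else 0

variable (n k) in
/-- `2^{(n-k)n}` times the probability, in the Gallager ensemble, that `x` is the transmitted
codeword and `z` is a codeword. -/
def pairWeight (x z : Fin n → ZMod 2) : ℝ :=
  ∑ H : Matrix (Fin (n - k)) (Fin n) (ZMod 2), codewordProb H x * if H *ᵥ z = 0 then 1 else 0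

lemma codewordProb_nonneg (H : Matrix (Fin (n - k)) (Fin n) (ZMod 2)) (x : Fin n → ZMod 2) :
    0 ≤ codewordProb H x := by
  unfold codewordProb; positivity

lemma codewordProb_zero (H : Matrix (Fin (n - k)) (Fin n) (ZMod 2)) : codewordProb H 0 = 0 := by
  simp [codewordProb, mem_nullNZ]

lemma sum_codewordProb (hkn : n - k < n) (H : Matrix (Fin (n - k)) (Fin n) (ZMod 2)) :
    ∑ x, codewordProb H x = 1 := by
  have hker : LinearMap.ker H.mulVecLin ≠ ⊥ :=
    LinearMap.ker_ne_bot_of_finrank_lt (by simpa using hkn)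
  obtain ⟨x, hx, hx0⟩ := Submodule.exists_mem_ne_zero_of_ne_bot hker
  have hne : (nullNZ n k H).Nonempty := ⟨x, mem_nullNZ.2 ⟨hx, hx0⟩⟩
  unfold codewordProb
  rw [← Finset.sum_subset (subset_univ (nullNZ n k H)) fun x _ hx => if_neg hx,
    Finset.sum_congr rfl fun x hx => if_pos hx]
  simp [hne.card_pos.ne']

lemma codewordProb_mul_card {H : Matrix (Fin (n - k)) (Fin n) (ZMod 2)} {x : Fin n → ZMod 2}
    (hx : x ∈ nullNZ n k H) : codewordProb H x * (nullNZ n k H).card = 1 := by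
  rw [codewordProb, if_pos hx, one_div_mul_cancel]
  exact_mod_cast (Finset.card_pos.2 ⟨x, hx⟩).ne'

lemma codewordProb_eq_of_mulVec_eq (A : (Fin n → ZMod 2) ≃ₗ[ZMod 2] (Fin n → ZMod 2))
    {H H' : Matrix (Fin (n - k)) (Fin n) (ZMod 2)} (hH : ∀ v, H' *ᵥ v = H *ᵥ A v)
    (x : Fin n → ZMod 2) : codewordProb H' x = codewordProb H (A x) := by
  have hmem : ∀ v, v ∈ nullNZ n k H' ↔ A v ∈ nullNZ n k H := by
    simp [mem_nullNZ, hH]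
  rw [codewordProb, codewordProb, Finset.card_equiv A.toEquiv hmem]
  exact if_congr (hmem x) rfl rfl

lemma pairWeight_map (A : (Fin n → ZMod 2) ≃ₗ[ZMod 2] (Fin n → ZMod 2)) (x z : Fin n → ZMod 2) :
    pairWeight n k (A x) (A z) = pairWeight n k x z := by
  let e : Matrix (Fin (n - k)) (Fin n) (ZMod 2) ≃ₗ[ZMod 2] Matrix (Fin (n - k)) (Fin n) (ZMod 2) :=
    LinearMap.toMatrix'.symm ≪≫ₗ A.arrowCongr (.refl _ _) ≪≫ₗ LinearMap.toMatrix'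
  have he : ∀ H v, e H *ᵥ v = H *ᵥ A.symm v := by
    intro H v
    simp [e, LinearMap.toMatrix'_mulVec]
  refine (Fintype.sum_equiv e.toEquiv _ _ fun H => ?_).symm
  simp [codewordProb_eq_of_mulVec_eq A.symm (he H), he]

lemma pairWeight_nonneg (x z : Fin n → ZMod 2) : 0 ≤ pairWeight n k x z :=
  sum_nonneg fun H _ => mul_nonneg (codewordProb_nonneg H x) (by positivity)

lemma pairWeight_zero_left (z : Fin n → ZMod 2) : pairWeight n k 0 z = 0 := by
  simp [pairWeight, codewordProb_zero]

lemma pairWeight_zero_right (x : Fin n → ZMod 2) :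
    pairWeight n k x 0 = ∑ H : Matrix (Fin (n - k)) (Fin n) (ZMod 2), codewordProb H x := by
  simp [pairWeight]

lemma pairWeight_le_pairWeight_zero (x z : Fin n → ZMod 2) :
    pairWeight n k x z ≤ pairWeight n k x 0 := by
  rw [pairWeight_zero_right]
  exact sum_le_sum fun H _ =>
    mul_le_of_le_one_right (codewordProb_nonneg H x) (by split_ifs <;> norm_num)

lemma sum_pairWeight_zero (hkn : n - k < n) :
    ∑ x, pairWeight n k x 0 = 2 ^ ((n - k) * n) := by
  simp_rw [pairWeight_zero_right]
  rw [sum_comm]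
  simp only [sum_codewordProb hkn, sum_const, card_univ, nsmul_eq_mul, mul_one]
  change ((Fintype.card (Fin (n - k) → Fin n → ZMod 2) : ℕ) : ℝ) = _
  simp [← pow_mul, mul_comm]

lemma card_nullNZ_add_one (H : Matrix (Fin (n - k)) (Fin n) (ZMod 2)) :
    #(nullNZ n k H) + 1 = #{z | H *ᵥ z = 0} := by
  have : ({z | H *ᵥ z = 0} : Finset (Fin n → ZMod 2)) = insert 0 (nullNZ n k H) := by
    ext z
    by_cases hz : z = 0 <;> simp [hz, mem_nullNZ]
  rw [this, card_insert_of_notMem (by simp [mem_nullNZ])]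

lemma sum_erase_pairWeight {x : Fin n → ZMod 2} (hx : x ≠ 0) :
    ∑ z ∈ univ.erase x, pairWeight n k x z = 2 ^ ((n - k) * (n - 1)) := by
  have hH : ∀ H : Matrix (Fin (n - k)) (Fin n) (ZMod 2),
      ∑ z ∈ univ.erase x, codewordProb H x * (if H *ᵥ z = 0 then 1 else 0) =
        if H *ᵥ x = 0 then 1 else 0 := by
    intro H
    by_cases hHx : H *ᵥ x = 0
    · rw [← mul_sum, sum_erase_eq_sub (mem_univ x), sum_boole, ← card_nullNZ_add_one,
        if_pos hHx]
      push_cast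
      rw [add_sub_cancel_right, codewordProb_mul_card (mem_nullNZ.2 ⟨hHx, hx⟩)]
    · simp [codewordProb, mem_nullNZ, hHx]
  unfold pairWeight
  rw [sum_comm, sum_congr rfl fun H _ => hH H, sum_boole, card_filter_mulVec_eq_zero hx]
  push_cast; ring

lemma pairWeight_zero_eq {x x' : Fin n → ZMod 2} (hx : x ≠ 0) (hx' : x' ≠ 0) :
    pairWeight n k x 0 = pairWeight n k x' 0 := by
  obtain ⟨A, hA⟩ := (linearIndependent_unique_iff.2 hx : LinearIndependent (ZMod 2) ![x])
    |>.exists_linearEquiv_apply_eq (linearIndependent_unique_iff.2 hx' : LinearIndependent _ ![x'])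
  have h := pairWeight_map (k := k) A x 0
  rwa [map_zero, show A x = x' from hA 0, eq_comm] at h

lemma pairWeight_eq {x z x' z' : Fin n → ZMod 2} (hx : x ≠ 0) (hz : z ≠ 0) (hxz : x ≠ z)
    (hx' : x' ≠ 0) (hz' : z' ≠ 0) (hxz' : x' ≠ z') :
    pairWeight n k x z = pairWeight n k x' z' := by
  obtain ⟨A, hA⟩ := (linearIndependent_pair_zmod_two hx hz hxz).exists_linearEquiv_apply_eq
    (linearIndependent_pair_zmod_two hx' hz' hxz')
  rw [← show A x = x' from hA 0, ← show A z = z' from hA 1, pairWeight_map]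

lemma pairWeight_zero_eq_div (hkn : n - k < n) {x : Fin n → ZMod 2} (hx : x ≠ 0) :
    pairWeight n k x 0 = 2 ^ ((n - k) * n) / (2 ^ n - 1) := by
  have h2n : (1 : ℝ) < 2 ^ n := one_lt_pow₀ one_lt_two (by omega)
  rw [eq_div_iff (by linarith), ← sum_pairWeight_zero hkn,
    ← sum_erase (f := fun x => pairWeight n k x 0) univ (pairWeight_zero_left 0),
    sum_congr rfl fun x' hx' => pairWeight_zero_eq (ne_of_mem_erase hx') hx]
  simp [card_univ]
  ring

lemma sum_pairWeight_zero_mul_le (hkn : n - k < n) {f : (Fin n → ZMod 2) → ℝ}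
    (hf : ∀ x, 0 ≤ f x) :
    ∑ x, pairWeight n k x 0 * f x ≤ 2 ^ ((n - k) * n) / (2 ^ n - 1) * ∑ x, f x := by
  have hc : (0 : ℝ) ≤ 2 ^ ((n - k) * n) / (2 ^ n - 1) :=
    div_nonneg (by positivity) (sub_nonneg.2 (one_le_pow₀ one_le_two))
  rw [mul_sum]
  refine sum_le_sum fun x _ => ?_
  rcases eq_or_ne x 0 with rfl | hx
  · rw [pairWeight_zero_left, zero_mul]
    exact mul_nonneg hc (hf 0)
  · rw [pairWeight_zero_eq_div hkn hx]

lemma sum_erase_pairWeight_mul {x x₀ z₀ : Fin n → ZMod 2} (hx : x ≠ 0) (hx₀ : x₀ ≠ 0)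
    (hz₀ : z₀ ≠ 0) (hx₀z₀ : x₀ ≠ z₀) (φ : (Fin n → ZMod 2) → ℝ) :
    ∑ z ∈ univ.erase x, pairWeight n k x z * φ z =
      pairWeight n k x₀ 0 * φ 0 + pairWeight n k x₀ z₀ * ∑ z ∈ (univ.erase x).erase 0, φ z := by
  rw [← add_sum_erase _ _ (mem_erase.2 ⟨hx.symm, mem_univ 0⟩), pairWeight_zero_eq hx hx₀, mul_sum]
  congr 1
  refine sum_congr rfl fun z hz => ?_
  obtain ⟨hz0, hzx, -⟩ : z ≠ 0 ∧ z ≠ x ∧ _ := by simpa only [mem_erase] using hz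
  rw [pairWeight_eq hx hz0 hzx.symm hx₀ hz₀ hx₀z₀]

lemma pairWeight_zero_add_mul {x₀ z₀ : Fin n → ZMod 2} (hx₀ : x₀ ≠ 0) (hz₀ : z₀ ≠ 0)
    (hx₀z₀ : x₀ ≠ z₀) :
    pairWeight n k x₀ 0 + pairWeight n k x₀ z₀ * (2 ^ n - 2) = 2 ^ ((n - k) * (n - 1)) := by
  have hcard : (#((univ.erase x₀).erase 0) : ℝ) = 2 ^ n - 2 := by
    have : 2 ≤ Fintype.card (Fin n → ZMod 2) :=
      card_le_univ (s := {x₀, 0}) |>.trans' (card_pair hx₀).ge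
    rw [card_erase_of_mem (mem_erase.2 ⟨hx₀.symm, mem_univ 0⟩), card_erase_of_mem (mem_univ _),
      card_univ, Nat.sub_sub, Nat.cast_sub this]
    simp
  have h := sum_erase_pairWeight_mul (k := k) hx₀ hx₀ hz₀ hx₀z₀ fun _ => 1
  simp only [mul_one, sum_const, nsmul_eq_mul, hcard, sum_erase_pairWeight hx₀] at h
  exact h.symm

lemma sum_erase_pairWeight_mul_le {x x₀ z₀ : Fin n → ZMod 2} (hx : x ≠ 0) (hx₀ : x₀ ≠ 0)
    (hz₀ : z₀ ≠ 0) (hx₀z₀ : x₀ ≠ z₀) {G : (Fin n → ZMod 2) → ℝ} (hG : ∀ z, 0 ≤ G z)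
    (hG1 : ∑ z, G z ≤ 1) :
    ∑ z ∈ univ.erase x, pairWeight n k x z * G z ≤
      pairWeight n k x₀ z₀ + (pairWeight n k x₀ 0 - pairWeight n k x₀ z₀) * G 0 := by
  have hrest : ∑ z ∈ (univ.erase x).erase 0, G z ≤ 1 - G 0 :=
    calc _ ≤ ∑ z ∈ univ.erase 0, G z :=
          sum_le_sum_of_subset_of_nonneg (erase_subset_erase _ (erase_subset _ _))
            fun z _ _ => hG z
      _ = ∑ z, G z - G 0 := sum_erase_eq_sub (mem_univ _)
      _ ≤ 1 - G 0 := by linarith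
  rw [sum_erase_pairWeight_mul hx hx₀ hz₀ hx₀z₀]
  nlinarith [mul_le_mul_of_nonneg_left hrest (pairWeight_nonneg (k := k) x₀ z₀)]

lemma exists_pair_ne_zero (hn : 2 ≤ n) :
    ∃ x₀ z₀ : Fin n → ZMod 2, x₀ ≠ 0 ∧ z₀ ≠ 0 ∧ x₀ ≠ z₀ := by
  refine ⟨Pi.single ⟨0, by omega⟩ 1, Pi.single ⟨1, by omega⟩ 1, by simp, by simp, fun h => ?_⟩
  simpa [Pi.single_apply, Fin.ext_iff] using congrFun h ⟨0, by omega⟩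

/-- For `x ≠ 0`, the weight `pairWeight n k x z` is a constant `σ` at all `z ∉ {0, x}`, below its
value `ρ` at `z = 0`; as `G` is substochastic in each row and in the column of `0`, the excess
`ρ - σ` is paid at most once. -/
lemma sum_sum_erase_pairWeight_mul_le (hn : 2 ≤ n)
    {G : (Fin n → ZMod 2) → (Fin n → ZMod 2) → ℝ} (hG : ∀ x z, 0 ≤ G x z)
    (hrow : ∀ x, ∑ z, G x z ≤ 1) (hcol : ∑ x, G x 0 ≤ 1) :
    ∑ x, ∑ z ∈ univ.erase x, pairWeight n k x z * G x z ≤ 2 ^ ((n - k) * (n - 1)) := by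
  obtain ⟨x₀, z₀, hx₀, hz₀, hx₀z₀⟩ := exists_pair_ne_zero hn
  set ρ := pairWeight n k x₀ 0
  set σ := pairWeight n k x₀ z₀
  have hσρ : σ ≤ ρ := pairWeight_le_pairWeight_zero _ _
  have hcol' : ∑ x ∈ univ.erase 0, G x 0 ≤ 1 :=
    (sum_le_sum_of_subset_of_nonneg (erase_subset _ _) fun x _ _ => hG x 0).trans hcol
  calc ∑ x, ∑ z ∈ univ.erase x, pairWeight n k x z * G x z
      = ∑ x ∈ univ.erase 0, ∑ z ∈ univ.erase x, pairWeight n k x z * G x z :=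
        (sum_erase _ (by simp [pairWeight_zero_left])).symm
    _ ≤ ∑ x ∈ univ.erase 0, (σ + (ρ - σ) * G x 0) := sum_le_sum fun x hx =>
        sum_erase_pairWeight_mul_le (ne_of_mem_erase hx) hx₀ hz₀ hx₀z₀ (hG x) (hrow x)
    _ = (2 ^ n - 1) * σ + (ρ - σ) * ∑ x ∈ univ.erase 0, G x 0 := by
        simp [sum_add_distrib, ← mul_sum, card_univ]
    _ ≤ (2 ^ n - 1) * σ + (ρ - σ) * 1 := by gcongr
    _ = 2 ^ ((n - k) * (n - 1)) := by rw [← pairWeight_zero_add_mul hx₀ hz₀ hx₀z₀]; ring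

lemma sum_sum_codewordProb_mul (f : (Fin n → ZMod 2) → ℝ)
    (g : (Fin n → ZMod 2) → (Fin n → ZMod 2) → ℝ) :
    ∑ H : Matrix (Fin (n - k)) (Fin n) (ZMod 2), ∑ x, codewordProb H x *
        (f x + ∑ z ∈ univ.erase x, (if H *ᵥ z = 0 then 1 else 0) * g x z) =
      ∑ x, pairWeight n k x 0 * f x + ∑ x, ∑ z ∈ univ.erase x, pairWeight n k x z * g x z := by
  rw [sum_comm]
  simp only [mul_add, sum_add_distrib, pairWeight, sum_mul, mul_sum]
  congr 1
  · simp
  · refine sum_congr rfl fun x _ => ?_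
    rw [sum_comm]
    simp only [mul_assoc]

end Gallager

open Gallager

namespace BIMC

variable {Y : Type} [Fintype Y] (W : BIMC Y)

lemma pXY_pos (x : ZMod 2) (y : Y) : 0 < W.pXY x y :=
  div_pos (W.p_pos x y) (add_pos (W.p_pos 0 y) (W.p_pos 1 y))

lemma sum_p (y : Y) : ∑ x, W.p x y = W.p 0 y + W.p 1 y :=
  sum_pair (zero_ne_one (α := ZMod 2))

lemma sum_p_mul_pXY (x : ZMod 2) (y : Y) : (∑ x', W.p x' y) * W.pXY x y = W.p x y := by
  rw [sum_p, pXY, mul_div_cancel₀ _ (add_pos (W.p_pos 0 y) (W.p_pos 1 y)).ne']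

lemma sum_pXY (y : Y) : ∑ x, W.pXY x y = 1 := by
  rw [← mul_right_inj' (add_pos (W.p_pos 0 y) (W.p_pos 1 y)).ne', ← sum_p, mul_sum]
  simp [sum_p_mul_pXY]

variable (n : ℕ) (δ : ℝ)

def probNotMemJar (x : Fin n → ZMod 2) : ℝ :=
  ∑ y : Fin n → Y, (∏ i, W.p (x i) (y i)) * if x ∉ W.jar n δ y then 1 else 0

def probMemJar (x z : Fin n → ZMod 2) : ℝ :=
  ∑ y : Fin n → Y, (∏ i, W.p (x i) (y i)) * if z ∈ W.jar n δ y then 1 else 0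

def posteriorSamplingProb (x z : Fin n → ZMod 2) : ℝ :=
  ∑ y : Fin n → Y, (∏ i, W.p (x i) (y i)) * ∏ i, W.pXY (z i) (y i)

variable {n δ}

lemma probNotMemJar_nonneg (x : Fin n → ZMod 2) : 0 ≤ W.probNotMemJar n δ x :=
  sum_nonneg fun _ _ => mul_nonneg (prod_nonneg fun _ _ => (W.p_pos _ _).le) (by positivity)

lemma posteriorSamplingProb_nonneg (x z : Fin n → ZMod 2) : 0 ≤ W.posteriorSamplingProb n x z :=
  sum_nonneg fun _ _ => mul_nonneg (prod_nonneg fun _ _ => (W.p_pos _ _).le)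
    (prod_nonneg fun _ _ => (W.pXY_pos _ _).le)

lemma sum_prod_p (x : Fin n → ZMod 2) : ∑ y : Fin n → Y, ∏ i, W.p (x i) (y i) = 1 := by
  rw [← Fintype.prod_sum (fun i a => W.p (x i) a)]
  simp [W.p_sum]

lemma sum_posteriorSamplingProb_right (x : Fin n → ZMod 2) :
    ∑ z, W.posteriorSamplingProb n x z = 1 := by
  unfold posteriorSamplingProb
  rw [sum_comm]
  refine (sum_congr rfl fun y _ => ?_).trans (W.sum_prod_p x)
  rw [← mul_sum, ← Fintype.prod_sum fun i b => W.pXY b (y i)]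
  simp [sum_pXY]

lemma sum_posteriorSamplingProb_left (z : Fin n → ZMod 2) :
    ∑ x, W.posteriorSamplingProb n x z = 1 := by
  unfold posteriorSamplingProb
  rw [sum_comm]
  refine (sum_congr rfl fun y _ => ?_).trans (W.sum_prod_p z)
  rw [← sum_mul, ← Fintype.prod_sum fun i a => W.p a (y i), ← prod_mul_distrib]
  simp [sum_p_mul_pXY]

lemma sum_probNotMemJar : ∑ x, W.probNotMemJar n δ x = 2 ^ n * W.Pdelta n δ := by
  simp only [probNotMemJar, Pdelta, mul_sum, prod_mul_distrib, prod_const, card_univ,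
    Fintype.card_fin, jar, mem_filter, mem_univ, true_and, not_le]
  refine sum_congr rfl fun x _ => sum_congr rfl fun y _ => ?_
  rw [← mul_assoc, ← mul_assoc, ← mul_pow]
  norm_num

lemma one_le_exp_mul_prod_pXY (hn : 0 < n) {z : Fin n → ZMod 2} {y : Fin n → Y}
    (hz : z ∈ W.jar n δ y) :
    1 ≤ Real.exp (n * (W.condEnt + δ)) * ∏ i, W.pXY (z i) (y i) := by
  have hjar : -(1 / (n : ℝ)) * ∑ i, Real.log (W.pXY (z i) (y i)) ≤ W.condEnt + δ := by
    simpa [jar] using hz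
  rw [← Real.exp_log (prod_pos fun i _ => W.pXY_pos (z i) (y i)), ← Real.exp_add,
    Real.log_prod fun i _ => (W.pXY_pos _ _).ne', Real.one_le_exp_iff]
  have hn' : (0 : ℝ) < n := Nat.cast_pos.2 hn
  have := mul_le_mul_of_nonneg_left hjar hn'.le
  field_simp at this
  linarith

lemma probMemJar_le (hn : 0 < n) (x z : Fin n → ZMod 2) :
    W.probMemJar n δ x z ≤ Real.exp (n * (W.condEnt + δ)) * W.posteriorSamplingProb n x z := by
  rw [posteriorSamplingProb, mul_sum]
  refine sum_le_sum fun y _ => ?_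
  have hp : 0 ≤ ∏ i, W.p (x i) (y i) := prod_nonneg fun _ _ => (W.p_pos _ _).le
  split_ifs with hz
  · nlinarith [W.one_le_exp_mul_prod_pXY hn hz]
  · rw [mul_zero]
    exact mul_nonneg (Real.exp_pos _).le (mul_nonneg hp (prod_nonneg fun _ _ => (W.pXY_pos _ _).le))

lemma sum_pairWeight_zero_mul_probNotMemJar_le {k : ℕ} (hkn : n - k < n) :
    ∑ x, pairWeight n k x 0 * W.probNotMemJar n δ x ≤
      2 ^ ((n - k) * n) / (2 ^ n - 1) * (2 ^ n * W.Pdelta n δ) := by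
  rw [← W.sum_probNotMemJar]
  exact sum_pairWeight_zero_mul_le hkn W.probNotMemJar_nonneg

lemma sum_sum_erase_pairWeight_mul_probMemJar_le {k : ℕ} (hn : 2 ≤ n) :
    ∑ x, ∑ z ∈ univ.erase x, pairWeight n k x z * W.probMemJar n δ x z ≤
      Real.exp (n * (W.condEnt + δ)) * 2 ^ ((n - k) * (n - 1)) :=
  calc _ ≤ ∑ x, ∑ z ∈ univ.erase x,
        pairWeight n k x z * (Real.exp (n * (W.condEnt + δ)) * W.posteriorSamplingProb n x z) := by
        gcongr with x _ z _
        · exact pairWeight_nonneg x z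
        · exact W.probMemJar_le (by omega) x z
    _ = Real.exp (n * (W.condEnt + δ)) *
          ∑ x, ∑ z ∈ univ.erase x, pairWeight n k x z * W.posteriorSamplingProb n x z := by
        simp only [mul_sum, mul_left_comm]
    _ ≤ Real.exp (n * (W.condEnt + δ)) * 2 ^ ((n - k) * (n - 1)) := by
        gcongr
        exact sum_sum_erase_pairWeight_mul_le hn W.posteriorSamplingProb_nonneg
          (fun x => (W.sum_posteriorSamplingProb_right x).le) (W.sum_posteriorSamplingProb_left 0).le

lemma Perr_le_sum_codewordProb_mul {k : ℕ} :
    W.Perr n k δ ≤ 1 / 2 ^ ((n - k) * n) * ∑ H : Matrix (Fin (n - k)) (Fin n) (ZMod 2), ∑ x,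
      codewordProb H x * (W.probNotMemJar n δ x +
        ∑ z ∈ univ.erase x, (if H *ᵥ z = 0 then 1 else 0) * W.probMemJar n δ x z) := by
  rw [Perr, mul_sum]
  refine sum_le_sum fun H _ => ?_
  rw [mul_sum]
  refine sum_le_sum fun x _ => ?_
  calc _ = 1 / 2 ^ ((n - k) * n) * (codewordProb H x * ∑ y : Fin n → Y,
          (∏ i, W.p (x i) (y i)) * (if x ∉ W.jar n δ y ∨
              ∃ z, z ≠ x ∧ H *ᵥ z = 0 ∧ z ∈ W.jar n δ y then 1 else 0)) := by
        simp only [mul_sum]; rfl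
    _ ≤ 1 / 2 ^ ((n - k) * n) * (codewordProb H x * ∑ y : Fin n → Y,
          (∏ i, W.p (x i) (y i)) * ((if x ∉ W.jar n δ y then 1 else 0) +
            ∑ z ∈ univ.erase x, if H *ᵥ z = 0 ∧ z ∈ W.jar n δ y then 1 else 0)) := by
        gcongr with y
        · exact codewordProb_nonneg H x
        · exact prod_nonneg fun _ _ => (W.p_pos _ _).le
        · exact ite_or_exists_ne_le x _ _
    _ = _ := by
        simp only [probNotMemJar, probMemJar, mul_add, mul_sum, sum_add_distrib]
        congr 1
        rw [sum_comm]
        refine sum_congr rfl fun z _ => sum_congr rfl fun y _ => ?_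
        rw [mul_left_comm (ite _ _ _), ite_zero_mul_ite_zero, mul_one]

lemma exp_neg_mul_CL_sub {k : ℕ} (hkn : k ≤ n) (hn : 0 < n) :
    Real.exp (-(n : ℝ) * (W.CL - δ - k / n * Real.log 2)) =
      Real.exp (n * (W.condEnt + δ)) / 2 ^ (n - k) := by
  rw [← Real.exp_log (by positivity : (0 : ℝ) < 2 ^ (n - k)), ← Real.exp_sub, Real.log_pow,
    Nat.cast_sub hkn, CL]
  congr 1
  field_simp
  ring

end BIMC

theorem gallager_error_bound_general {Y : Type} [Fintype Y] (W : BIMC Y)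
    (n k : ℕ) (hk : 1 ≤ k) (hkn : k < n) (δ : ℝ) :
    W.Perr n k δ ≤
      (1 / (1 - (2 : ℝ) ^ (-(n : ℝ)))) * W.Pdelta n δ +
        Real.exp (-(n : ℝ) * (W.CL - δ - (k : ℝ) / n * Real.log 2)) := by
  have hpow : (2 : ℝ) ^ ((n - k) * n) = 2 ^ ((n - k) * (n - 1)) * 2 ^ (n - k) := by
    rw [← pow_add, ← Nat.mul_add_one, Nat.sub_add_cancel (by omega : 1 ≤ n)]
  calc W.Perr n k δ ≤ _ := W.Perr_le_sum_codewordProb_mul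
    _ = 1 / 2 ^ ((n - k) * n) * (∑ x, pairWeight n k x 0 * W.probNotMemJar n δ x +
          ∑ x, ∑ z ∈ univ.erase x, pairWeight n k x z * W.probMemJar n δ x z) := by
        rw [sum_sum_codewordProb_mul]
    _ ≤ 1 / 2 ^ ((n - k) * n) * (2 ^ ((n - k) * n) / (2 ^ n - 1) * (2 ^ n * W.Pdelta n δ) +
          Real.exp (n * (W.condEnt + δ)) * 2 ^ ((n - k) * (n - 1))) := by
        gcongr
        · exact W.sum_pairWeight_zero_mul_probNotMemJar_le (by omega)
        · exact W.sum_sum_erase_pairWeight_mul_probMemJar_le (by omega)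
    _ = _ := by
        rw [one_div_one_sub_two_rpow_neg (by omega), W.exp_neg_mul_CL_sub hkn.le (by omega), hpow]
        field_simp

/-- Theorem 1: for every block length `n`, every `k` with `1 ≤ k < n`
and every `δ > 0`,
`P_err(n,k,δ) ≤ (1/(1-2^{-n})) P_δ + e^{-n (C_L - δ - R)}` where `R = (k/n) ln 2`. -/
theorem gallager_error_bound {Y : Type} [Fintype Y] (W : BIMC Y)
    (n k : ℕ) (hk : 1 ≤ k) (hkn : k < n) (δ : ℝ) (hδ : 0 < δ) :
    W.Perr n k δ ≤
      (1 / (1 - (2 : ℝ) ^ (-(n : ℝ)))) * W.Pdelta n δ +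
        Real.exp (-(n : ℝ) * (W.CL - δ - (k : ℝ) / n * Real.log 2)) :=
  gallager_error_bound_general W n k hk hkn δ
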